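/- (Bhatia–Davis inequality) Let x₁,…,x_l be real numbers with min over all of them equal to a and max equal to b, and let μ = (1/l) Σⱼ xⱼ be their mean and V = (1/l) Σⱼ (xⱼ - μ)² their (population) variance. Then V ≤ (b - μ)(μ - a). -/

import Mathlib

/-! Put `y = x - μ`, `A = μ - a`, `B = b - μ`. For `a ≤ x ≤ b` the product `(b - x)(x - a) = (B - y)(y + A)`
is nonnegative, i.e. `y² ≤ AB + (B - A) y`. Summing over the data kills the linear term, since the
deviations from the mean sum to zero. -/

open Finset

theorem sq_sub_le_of_mem_Icc {a b x μ : ℝ} (hx : x ∈ Set.Icc a b) :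
    (x - μ) ^ 2 ≤ (b - μ) * (μ - a) + (a + b - 2 * μ) * (x - μ) := by
  nlinarith [mul_nonneg (sub_nonneg.2 hx.2) (sub_nonneg.2 hx.1)]

theorem sum_sq_sub_le_card_mul {ι : Type*} (s : Finset ι) {f : ι → ℝ} {a b μ : ℝ}
    (hf : ∀ i ∈ s, f i ∈ Set.Icc a b) (hμ : ∑ i ∈ s, f i = #s * μ) :
    ∑ i ∈ s, (f i - μ) ^ 2 ≤ #s * ((b - μ) * (μ - a)) :=
  calc ∑ i ∈ s, (f i - μ) ^ 2
      ≤ ∑ i ∈ s, ((b - μ) * (μ - a) + (a + b - 2 * μ) * (f i - μ)) :=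
        sum_le_sum fun i hi => sq_sub_le_of_mem_Icc (hf i hi)
    _ = #s * ((b - μ) * (μ - a)) + (a + b - 2 * μ) * ∑ i ∈ s, (f i - μ) := by
        rw [sum_add_distrib, sum_const, nsmul_eq_mul, mul_sum]
    _ = #s * ((b - μ) * (μ - a)) := by
        rw [sum_sub_distrib, hμ, sum_const, nsmul_eq_mul, sub_self, mul_zero, add_zero]

theorem stmt_11 (l : ℕ) (hl : 0 < l) (x : Fin l → ℝ)
    (hne : (Finset.univ : Finset (Fin l)).Nonempty := ⟨⟨0, hl⟩, Finset.mem_univ _⟩)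
    (a b μ V : ℝ)
    (ha : a = Finset.univ.inf' hne x) (hb : b = Finset.univ.sup' hne x)
    (hμ : μ = (∑ j, x j) / l) (hV : V = (∑ j, (x j - μ) ^ 2) / l) :
    V ≤ (b - μ) * (μ - a) := by
  have hlR : (0 : ℝ) < l := by exact_mod_cast hl
  have hbounds : ∀ j ∈ univ, x j ∈ Set.Icc a b := fun j hj =>
    ⟨ha ▸ inf'_le x hj, hb ▸ le_sup' x hj⟩
  have hsum : ∑ j, x j = #(univ : Finset (Fin l)) * μ := by
    rw [card_univ, Fintype.card_fin, hμ]
    field_simp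
  have key := sum_sq_sub_le_card_mul univ hbounds hsum
  rw [card_univ, Fintype.card_fin] at key
  rw [hV, div_le_iff₀ hlR, mul_comm]
  exact key
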